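/- Suppose an instance of P2,S1|s_j,t_j|C_max satisfies p_j < s_i for all pairs of jobs i, j. Then in every feasible schedule the job intervals [σ_i, σ_i + A_i), i = 1,…,n, are pairwise disjoint (even for jobs assigned to different machines): for any two distinct jobs i, j with σ_i ≤ σ_j one has σ_j ≥ σ_i + A_i. Consequently every feasible schedule satisfies C_max ≥ Σ_{j=1}^n A_j. -/

import Mathlib

/-!
If `σ i ≤ σ j`, the loading of `j` cannot start before the loading of `i` has ended.
Since `p i < s j`, the loading of `j` then ends after the processing of `i` ends, so the
server forces it to wait until the unloading of `i` is over: job `i` is finished before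
`j` starts. The jobs therefore occupy pairwise disjoint intervals of `[0, C_max)`, and
their lengths add up to at most `C_max`.
-/

open Finset

/-- An instance of the problem `P2,S1|s_j,t_j|C_max`: `n` jobs, each with positive
loading time `s j`, processing time `p j`, and unloading time `t j`. -/
structure PInstance (n : ℕ) where
  s : Fin n → ℝ
  p : Fin n → ℝ
  t : Fin n → ℝ
  s_pos : ∀ j, 0 < s j
  p_pos : ∀ j, 0 < p j
  t_pos : ∀ j, 0 < t j

namespace PInstance

variable {n : ℕ}

/-- The length `A j = s j + p j + t j` of job `j`. -/
def A (I : PInstance n) (j : Fin n) : ℝ := I.s j + I.p j + I.t j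

/-- Feasibility of the schedule assigning start time `σ j` and machine `μ j` to job `j`:
start times are nonnegative, machines are in `{1, 2}`, distinct jobs on the same machine
occupy disjoint half-open intervals `[σ j, σ j + A j)`, and the `2n` server intervals
(the loading intervals `[σ j, σ j + s j)` and the unloading intervals
`[σ j + s j + p j, σ j + A j)`) are pairwise disjoint. -/
def Feasible (I : PInstance n) (σ : Fin n → ℝ) (μ : Fin n → ℕ) : Prop :=
  (∀ j, 0 ≤ σ j) ∧
  (∀ j, μ j = 1 ∨ μ j = 2) ∧
  (∀ i j, i ≠ j → μ i = μ j → σ i + I.A i ≤ σ j ∨ σ j + I.A j ≤ σ i) ∧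
  (∀ i j, i ≠ j → σ i + I.s i ≤ σ j ∨ σ j + I.s j ≤ σ i) ∧
  (∀ i j, i ≠ j →
    σ i + I.A i ≤ σ j + I.s j + I.p j ∨ σ j + I.A j ≤ σ i + I.s i + I.p i) ∧
  (∀ i j, σ i + I.s i ≤ σ j + I.s j + I.p j ∨ σ j + I.A j ≤ σ i)

/-- `C` is the makespan of the schedule with start times `σ`:
`C = max_{j=1,…,n} (σ j + A j)`. -/
def IsMakespan (I : PInstance n) (σ : Fin n → ℝ) (C : ℝ) : Prop :=
  (∀ j, σ j + I.A j ≤ C) ∧ ∃ j, σ j + I.A j = C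

end PInstance

theorem Finset.sum_le_of_forall_add_le_of_le {ι α : Type*} [DecidableEq ι] [AddCommGroup α]
    [LinearOrder α] [IsOrderedAddMonoid α] {a ℓ : ι → α} (ha : ∀ i, 0 ≤ a i)
    (hdisj : ∀ i j, i ≠ j → a i ≤ a j → a i + ℓ i ≤ a j) (S : Finset ι) {b : α} (hb : 0 ≤ b)
    (hS : ∀ i ∈ S, a i + ℓ i ≤ b) : ∑ i ∈ S, ℓ i ≤ b := by
  induction S using Finset.induction_on_max_value a generalizing b with
  | empty => simpa using hb
  | insert j S hjS hmax ih =>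
    have hrest : ∑ i ∈ S, ℓ i ≤ a j :=
      ih (ha j) fun i hi => hdisj i j (ne_of_mem_of_not_mem hi hjS) (hmax i hi)
    rw [sum_insert hjS, add_comm]
    exact (add_le_add_left hrest _).trans (hS j (mem_insert_self j S))

namespace PInstance

variable {n : ℕ}

theorem A_pos (I : PInstance n) (j : Fin n) : 0 < I.A j := by
  unfold A
  linarith [I.s_pos j, I.p_pos j, I.t_pos j]

theorem Feasible.add_A_le_of_le {I : PInstance n} {σ : Fin n → ℝ} {μ : Fin n → ℕ}
    (hfeas : I.Feasible σ μ) (hps : ∀ i j, I.p j < I.s i) {i j : Fin n} (hij : i ≠ j)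
    (hle : σ i ≤ σ j) : σ i + I.A i ≤ σ j := by
  obtain ⟨-, -, -, hload, -, hmixed⟩ := hfeas
  have hloaded : σ i + I.s i ≤ σ j := by
    rcases hload i j hij with h | h
    · exact h
    · linarith [I.s_pos j]
  rcases hmixed j i with h | h
  · linarith [hps j i]
  · exact h

theorem IsMakespan.nonneg {I : PInstance n} {σ : Fin n → ℝ} {C : ℝ} (hσ : ∀ j, 0 ≤ σ j)
    (hC : I.IsMakespan σ C) : 0 ≤ C := by
  obtain ⟨j, hj⟩ := hC.2
  linarith [hσ j, I.A_pos j]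

end PInstance

/-- If `p j < s i` for all pairs of jobs `i, j`, then in every feasible
schedule the job intervals `[σ i, σ i + A i)` are pairwise disjoint (even across
machines): for distinct `i, j` with `σ i ≤ σ j` one has `σ j ≥ σ i + A i`.
Consequently `C_max ≥ Σ_j A j`. -/
theorem short_processing_sequential {n : ℕ} (I : PInstance n)
    (hps : ∀ i j, I.p j < I.s i)
    (σ : Fin n → ℝ) (μ : Fin n → ℕ)
    (hfeas : I.Feasible σ μ) (Cmax : ℝ) (hC : I.IsMakespan σ Cmax) :
    (∀ i j, i ≠ j → σ i ≤ σ j → σ i + I.A i ≤ σ j) ∧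
      (∑ j, I.A j) ≤ Cmax := by
  have hdisj : ∀ i j, i ≠ j → σ i ≤ σ j → σ i + I.A i ≤ σ j :=
    fun _ _ hij hle => hfeas.add_A_le_of_le hps hij hle
  exact ⟨hdisj, sum_le_of_forall_add_le_of_le hfeas.1 hdisj univ (hC.nonneg hfeas.1)
    fun i _ => hC.1 i⟩
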